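/- arXiv:1609.07134 — 3 statements merged into one kernel-verified Lean document; each statement's English description precedes it below -/
import Mathlib

section
/- The Non-commutative Subset Convolution is associative: for functions f, g, h from subsets of a finite linearly ordered universe U to ℤ, (f ⋄ g) ⋄ h = f ⋄ (g ⋄ h), where (f ⋄ g)(X) = ∑_{A ⊎ B = X} f(A)g(B)I(A,B). -/
/-- `I A B = (-1)^|{(a,b) ∈ A × B : a > b}|`. -/
def Isgn (A B : Finset ℕ) : ℤ :=
  (-1) ^ ((A ×ˢ B).filter (fun p => p.2 < p.1)).card

/-- Non-commutative Subset Convolution: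
`(f ⋄ g)(X) = ∑_{A ⊎ B = X} f(A) g(B) I(A,B)`. -/
def nsc (f g : Finset ℕ → ℤ) (X : Finset ℕ) : ℤ :=
  ∑ A ∈ X.powerset, f A * g (X \ A) * Isgn A (X \ A)

lemma Isgn_union_left {A B C : Finset ℕ} (h : Disjoint A B) :
    Isgn (A ∪ B) C = Isgn A C * Isgn B C := by
  unfold Isgn
  rw [← pow_add]
  congr 1
  rw [Finset.union_product, Finset.filter_union, Finset.card_union_of_disjoint]
  apply Finset.disjoint_filter_filter
  rw [Finset.disjoint_left]
  intro p hp hp'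
  simp only [Finset.mem_product] at hp hp'
  exact (Finset.disjoint_left.mp h) hp.1 hp'.1

lemma Isgn_union_right {A B C : Finset ℕ} (h : Disjoint B C) :
    Isgn A (B ∪ C) = Isgn A B * Isgn A C := by
  unfold Isgn
  rw [← pow_add]
  congr 1
  rw [Finset.product_union, Finset.filter_union, Finset.card_union_of_disjoint]
  apply Finset.disjoint_filter_filter
  rw [Finset.disjoint_left]
  intro p hp hp'
  simp only [Finset.mem_product] at hp hp'
  exact (Finset.disjoint_left.mp h) hp.2 hp'.2

theorem nsc_assoc (f g h : Finset ℕ → ℤ) :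
    nsc (nsc f g) h = nsc f (nsc g h) := by
  funext X
  simp only [nsc, Finset.sum_mul, Finset.mul_sum]
  rw [Finset.sum_sigma', Finset.sum_sigma']
  refine Finset.sum_nbij' (fun p => ⟨p.2, p.1 \ p.2⟩) (fun p => ⟨p.1 ∪ p.2, p.1⟩) ?_ ?_ ?_ ?_ ?_
  · rintro ⟨A, A'⟩ hp
    simp only [Finset.mem_sigma, Finset.mem_powerset] at hp ⊢
    exact ⟨hp.2.trans hp.1, Finset.sdiff_subset_sdiff hp.1 (le_refl _)⟩
  · rintro ⟨B, B'⟩ hp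
    simp only [Finset.mem_sigma, Finset.mem_powerset] at hp ⊢
    constructor
    · exact Finset.union_subset hp.1 (hp.2.trans Finset.sdiff_subset)
    · exact Finset.subset_union_left
  · rintro ⟨A, A'⟩ hp
    simp only [Finset.mem_sigma, Finset.mem_powerset] at hp
    simp [Finset.union_sdiff_of_subset hp.2]
  · rintro ⟨B, B'⟩ hp
    simp only [Finset.mem_sigma, Finset.mem_powerset] at hp
    have hd : Disjoint B B' := Finset.disjoint_of_subset_right hp.2 Finset.sdiff_disjoint.symm
    simp [Finset.union_sdiff_cancel_left hd]
  · rintro ⟨A, A'⟩ hp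
    simp only [Finset.mem_sigma, Finset.mem_powerset] at hp
    obtain ⟨hAX, hA'A⟩ := hp
    have e1 : (X \ A') \ (A \ A') = X \ A := by
      rw [sdiff_sdiff]; congr 1; rw [Finset.sup_eq_union, Finset.union_sdiff_of_subset hA'A]
    have e2 : (A \ A') ∪ (X \ A) = X \ A' := by
      rw [Finset.union_comm]
      exact Finset.sdiff_union_sdiff_cancel hAX hA'A
    have d1 : Disjoint A' (A \ A') := Finset.disjoint_sdiff
    have d2 : Disjoint (A \ A') (X \ A) :=
      Finset.disjoint_of_subset_left Finset.sdiff_subset Finset.sdiff_disjoint.symm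
    have s1 : Isgn A (X \ A) = Isgn A' (X \ A) * Isgn (A \ A') (X \ A) := by
      rw [← Isgn_union_left d1, Finset.union_sdiff_of_subset hA'A]
    have s2 : Isgn A' (X \ A') = Isgn A' (A \ A') * Isgn A' (X \ A) := by
      rw [← Isgn_union_right d2, e2]
    dsimp only
    rw [e1, s1, s2]
    ring
end

section
/- For an allowed triple (A, B∪E, C∪E) with B,C ⊆ D, E ⊆ U∖D, A ⊆ U and A∩E=∅, any element v ∈ E forces the bit pattern ([v∈A],[v∈B∪E],[v∈C∪E]) = (0,1,1), which is an allowed pattern; consequently, in the sum defining τ_D(f⊙g), all non-zero summands satisfy E₁ = F₁ and E₂ = F₂ (the splittings of E in the B-coordinate and C-coordinate agree). -/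
open scoped symmDiff

/-- A triple `(A,B,C)` is allowed iff `A ∩ (B ∆ C) = C \ B`, equivalently every
element has bit-pattern in `{(0,0,0),(1,0,0),(1,0,1),(0,1,0),(0,1,1),(1,1,1)}`. -/
def Allowed (A B C : Finset ℕ) : Prop := A ∩ (B ∆ C) = C \ B

lemma allowed_not001 {A B C : Finset ℕ} (h : Allowed A B C) {v : ℕ}
    (hA : v ∉ A) (hB : v ∉ B) (hC : v ∈ C) : False := by
  have hv : v ∈ C \ B := Finset.mem_sdiff.mpr ⟨hC, hB⟩
  rw [← h, Finset.mem_inter] at hv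
  exact hA hv.1

theorem join_summands_force_equal_splittings
    (f g : Finset ℕ → Finset ℕ → Finset ℕ → ℤ)
    (hf : ∀ A B C, f A B C ≠ 0 → Allowed A B C)
    (hg : ∀ A B C, g A B C ≠ 0 → Allowed A B C)
    (D E : Finset ℕ) (hDE : Disjoint D E) :
    -- any `v ∈ E` in a triple `(A, B∪E, C∪E)` with `A` disjoint from `E`
    -- has the allowed bit-pattern `(0,1,1)`:
    (∀ (A B C : Finset ℕ), Disjoint A E → ∀ v ∈ E,
      (v ∈ A) = False ∧ (v ∈ B ∪ E) = True ∧ (v ∈ C ∪ E) = True) ∧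
    -- consequently, nonzero summands in `τ_D (f ⊙ g)` have matching splittings of `E`:
    (∀ (A₁ A₂ B₁ B₂ C₁ C₂ E₁ E₂ F₁ F₂ : Finset ℕ),
      A₁ ⊆ D → A₂ ⊆ D → B₁ ⊆ D → B₂ ⊆ D → C₁ ⊆ D → C₂ ⊆ D →
      E₁ ∪ E₂ = E → Disjoint E₁ E₂ → F₁ ∪ F₂ = E → Disjoint F₁ F₂ →
      f A₁ (B₁ ∪ E₁) (C₁ ∪ F₁) * g A₂ (B₂ ∪ E₂) (C₂ ∪ F₂) ≠ 0 →
      E₁ = F₁ ∧ E₂ = F₂) := by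
  constructor
  · intro A B C hAE v hv
    refine ⟨?_, ?_, ?_⟩
    · simp [Finset.disjoint_right.mp hAE hv]
    · simp [Finset.mem_union, hv]
    · simp [Finset.mem_union, hv]
  · intro A₁ A₂ B₁ B₂ C₁ C₂ E₁ E₂ F₁ F₂ hA₁ hA₂ hB₁ hB₂ hC₁ hC₂ hE hEd hF hFd hne
    have hfne : f A₁ (B₁ ∪ E₁) (C₁ ∪ F₁) ≠ 0 := fun h => hne (by rw [h, zero_mul])
    have hgne : g A₂ (B₂ ∪ E₂) (C₂ ∪ F₂) ≠ 0 := fun h => hne (by rw [h, mul_zero])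
    have haf := hf _ _ _ hfne
    have hag := hg _ _ _ hgne
    have hnotD : ∀ v ∈ E, v ∉ D := fun v hv => Finset.disjoint_right.mp hDE hv
    have key : E₁ = F₁ := by
      ext v
      constructor
      · intro hv1
        by_contra hvF1
        have hvE : v ∈ E := hE ▸ Finset.mem_union_left _ hv1
        have hvD := hnotD v hvE
        have hvF2 : v ∈ F₂ := by
          have := hF ▸ hvE
          rcases Finset.mem_union.mp this with h | h
          · exact absurd h hvF1
          · exact h
        have hvE2 : v ∉ E₂ := Finset.disjoint_left.mp hEd hv1
        exact allowed_not001 hag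
          (fun h => hvD (hA₂ h))
          (fun h => by
            rcases Finset.mem_union.mp h with h | h
            exacts [hvD (hB₂ h), hvE2 h])
          (Finset.mem_union_right _ hvF2)
      · intro hv1
        by_contra hvE1
        have hvE : v ∈ E := hF ▸ Finset.mem_union_left _ hv1
        have hvD := hnotD v hvE
        have hvF2 : v ∉ F₂ := Finset.disjoint_left.mp hFd hv1
        exact allowed_not001 haf
          (fun h => hvD (hA₁ h))
          (fun h => by
            rcases Finset.mem_union.mp h with h | h
            exacts [hvD (hB₁ h), hvE1 h])
          (Finset.mem_union_right _ hv1)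
    refine ⟨key, ?_⟩
    ext v
    constructor
    · intro hv
      have hvE : v ∈ E := hE ▸ Finset.mem_union_right _ hv
      have hvE1 : v ∉ E₁ := Finset.disjoint_right.mp hEd hv
      have := hF ▸ hvE
      rcases Finset.mem_union.mp this with h | h
      · exact absurd (key ▸ h) hvE1
      · exact h
    · intro hv
      have hvE : v ∈ E := hF ▸ Finset.mem_union_right _ hv
      have hvF1 : v ∉ F₁ := Finset.disjoint_right.mp hFd hv
      have := hE ▸ hvE
      rcases Finset.mem_union.mp this with h | h
      · exact absurd (key ▸ h) hvF1
      · exact h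
end

section
/- The transform τ_D is injective on Ham-supported functions: the map f ↦ (τ_D f)_{D⊆U}, with (τ_D f)(E,B,C) = I(B,E)·I(C,E)·∑_{A⊆D} f(A, B∪E, C∪E) for B,C ⊆ D and E ⊆ U∖D, determines f uniquely among functions supported on allowed triples. -/
open scoped symmDiff

/-- `(τ_D f)(E,B,C) = I(B,E)·I(C,E)·∑_{A⊆D} f(A, B∪E, C∪E)`. -/
def tau (D : Finset ℕ) (f : Finset ℕ → Finset ℕ → Finset ℕ → ℤ)
    (E B C : Finset ℕ) : ℤ :=
  Isgn B E * Isgn C E * ∑ A ∈ D.powerset, f A (B ∪ E) (C ∪ E)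

theorem tau_injective_on_ham (U : Finset ℕ)
    (f g : Finset ℕ → Finset ℕ → Finset ℕ → ℤ)
    (hf : ∀ A B C, f A B C ≠ 0 → Allowed A B C ∧ A ⊆ U ∧ B ⊆ U ∧ C ⊆ U)
    (hg : ∀ A B C, g A B C ≠ 0 → Allowed A B C ∧ A ⊆ U ∧ B ⊆ U ∧ C ⊆ U)
    (h : ∀ D E B C : Finset ℕ, D ⊆ U → E ⊆ U \ D → B ⊆ D → C ⊆ D →
      tau D f E B C = tau D g E B C) :
    f = g := by
  funext A B C
  by_cases hBC : B ⊆ U ∧ C ⊆ U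
  · obtain ⟨hBU, hCU⟩ := hBC
    have key : ∀ n (A : Finset ℕ), A.card = n → A ⊆ U → A ∩ (B ∆ C) = C \ B →
        f A B C = g A B C := by
      intro n
      induction n using Nat.strong_induction_on with
      | _ n ih =>
        intro A hcard hAU hall
        set D := (B ∆ C) ∪ A with hD
        have hBCU : B ∆ C ⊆ U := by
          intro a ha
          rcases Finset.mem_symmDiff.mp ha with ⟨h1, _⟩ | ⟨h1, _⟩
          · exact hBU h1
          · exact hCU h1
        have hDU : D ⊆ U := Finset.union_subset hBCU hAU
        have hE : B \ D ⊆ U \ D :=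
          Finset.sdiff_subset_sdiff hBU (le_refl D)
        have hBD : B \ D = C \ D := by
          ext a
          simp only [Finset.mem_sdiff, hD, Finset.mem_union, Finset.mem_symmDiff]
          constructor
          · rintro ⟨haB, hnd⟩
            refine ⟨?_, hnd⟩
            by_contra haC
            exact hnd (Or.inl (Or.inl ⟨haB, haC⟩))
          · rintro ⟨haC, hnd⟩
            refine ⟨?_, hnd⟩
            by_contra haB
            exact hnd (Or.inl (Or.inr ⟨haC, haB⟩))
        have hBun : (B ∩ D) ∪ (B \ D) = B := by
          ext a; simp only [Finset.mem_union, Finset.mem_inter, Finset.mem_sdiff]; tauto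
        have hCun : (C ∩ D) ∪ (B \ D) = C := by
          rw [hBD]
          ext a; simp only [Finset.mem_union, Finset.mem_inter, Finset.mem_sdiff]; tauto
        have htau := h D (B \ D) (B ∩ D) (C ∩ D) hDU hE
          Finset.inter_subset_right Finset.inter_subset_right
        unfold tau at htau
        rw [hBun, hCun] at htau
        have hsgn : Isgn (B ∩ D) (B \ D) * Isgn (C ∩ D) (B \ D) ≠ 0 := by
          apply mul_ne_zero <;>
            exact pow_ne_zero _ (by norm_num)
        rw [mul_assoc, mul_assoc] at htau
        have hsum : ∑ A' ∈ D.powerset, f A' B C = ∑ A' ∈ D.powerset, g A' B C := by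
          have h1 : Isgn (B ∩ D) (B \ D) ≠ 0 := pow_ne_zero _ (by norm_num)
          have h2 : Isgn (C ∩ D) (B \ D) ≠ 0 := pow_ne_zero _ (by norm_num)
          exact mul_left_cancel₀ h2 (mul_left_cancel₀ h1 htau)
        have hCBsubA : C \ B ⊆ A := by
          rw [← hall]; exact Finset.inter_subset_left
        have hAD : A ∈ D.powerset := Finset.mem_powerset.mpr Finset.subset_union_right
        have hzero : ∀ A' ∈ D.powerset, A' ≠ A → f A' B C - g A' B C = 0 := by
          intro A' hA' hne
          by_cases hfz : f A' B C = 0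
          · by_cases hgz : g A' B C = 0
            · rw [hfz, hgz, sub_zero]
            · obtain ⟨hall', hA'U, _, _⟩ := hg A' B C hgz
              have hsub : A' ⊆ A := by
                intro a ha
                have haD : a ∈ D := Finset.mem_powerset.mp hA' ha
                rcases Finset.mem_union.mp haD with haBC | haA
                · have : a ∈ A' ∩ (B ∆ C) := Finset.mem_inter.mpr ⟨ha, haBC⟩
                  rw [hall'] at this
                  exact hCBsubA this
                · exact haA
              have hlt : A'.card < n := by
                rw [← hcard]
                exact Finset.card_lt_card (lt_of_le_of_ne hsub hne)
              rw [ih A'.card hlt A' rfl (hsub.trans hAU) hall', sub_self]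
          · obtain ⟨hall', hA'U, _, _⟩ := hf A' B C hfz
            have hsub : A' ⊆ A := by
              intro a ha
              have haD : a ∈ D := Finset.mem_powerset.mp hA' ha
              rcases Finset.mem_union.mp haD with haBC | haA
              · have : a ∈ A' ∩ (B ∆ C) := Finset.mem_inter.mpr ⟨ha, haBC⟩
                rw [hall'] at this
                exact hCBsubA this
              · exact haA
            have hlt : A'.card < n := by
              rw [← hcard]
              exact Finset.card_lt_card (lt_of_le_of_ne hsub hne)
            rw [ih A'.card hlt A' rfl (hsub.trans hAU) hall', sub_self]
        have : ∑ A' ∈ D.powerset, (f A' B C - g A' B C) = 0 := by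
          rw [Finset.sum_sub_distrib, hsum, sub_self]
        have hfin : f A B C - g A B C = 0 := by
          rw [← Finset.sum_eq_single_of_mem A hAD hzero]
          exact this
        linarith
    by_cases hz : f A B C = 0 ∧ g A B C = 0
    · rw [hz.1, hz.2]
    · rcases not_and_or.mp hz with hfz | hgz
      · obtain ⟨hall, hAU, _, _⟩ := hf A B C hfz
        exact key A.card A rfl hAU hall
      · obtain ⟨hall, hAU, _, _⟩ := hg A B C hgz
        exact key A.card A rfl hAU hall
  · have hf0 : f A B C = 0 := by
      by_contra hne
      exact hBC ⟨(hf A B C hne).2.2.1, (hf A B C hne).2.2.2⟩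
    have hg0 : g A B C = 0 := by
      by_contra hne
      exact hBC ⟨(hg A B C hne).2.2.1, (hg A B C hne).2.2.2⟩
    rw [hf0, hg0]
end
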